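/- arXiv:2305.03465 — 7 statements merged into one kernel-verified Lean document; each statement's English description precedes it below -/
import Mathlib

section
/- Let F be a field, let P ≤ N be positive integers, and let I = {i_1, …, i_P} be a set of non-negative integers with 0 ≤ i_1 < ⋯ < i_P. Then there exists a finite (finite-dimensional) field extension K/F and a vector a = (a_1, …, a_N) ∈ K^N such that the generalized Vandermonde matrix GV(a, I) has the MDS property, i.e., for every injective selection of P columns the resulting P×P matrix has nonzero determinant. -/
/-- The generalized Vandermonde matrix `GV(a, I)`: the `P × N` matrix whose `(p, n)`
entry is `a n ^ i p`, where `i : Fin P → ℕ` enumerates the exponent set `I`. -/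
def GV {K : Type} [Field K] {P N : ℕ} (a : Fin N → K) (i : Fin P → ℕ) :
    Matrix (Fin P) (Fin N) K :=
  Matrix.of fun p n => a n ^ i p

open MvPolynomial in
/-- The determinant of the generic generalized Vandermonde matrix with strictly increasing
exponents and distinct variables is a nonzero polynomial. -/
lemma gv_poly_ne_zero {K : Type} [Field K] {P N : ℕ} (i : Fin P → ℕ) (hi : StrictMono i)
    (c : Fin P → Fin N) (hc : Function.Injective c) :
    (Matrix.of fun p n : Fin P => (X (c n) : MvPolynomial (Fin N) K) ^ i p).det ≠ 0 := by
  have key : ∀ σ : Equiv.Perm (Fin P),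
      (∏ p, (Matrix.of fun p n : Fin P => (X (c n) : MvPolynomial (Fin N) K) ^ i p) (σ p) p)
        = monomial (∑ p, Finsupp.single (c p) (i (σ p))) 1 := fun σ => by
    simp only [Matrix.of_apply, X_pow_eq_monomial]
    rw [monomial_sum_one]
  have hsum : ∀ a b : Fin P → ℕ,
      (∑ p, Finsupp.single (c p) (a p)) = (∑ p, Finsupp.single (c p) (b p)) → a = b := by
    intro a b h
    funext p
    have := DFunLike.congr_fun h (c p)
    simpa [Finsupp.finset_sum_apply, Finsupp.single_apply, hc.eq_iff] using this
  have hmono : ∀ σ : Equiv.Perm (Fin P),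
      (∑ p, Finsupp.single (c p) (i (σ p))) = (∑ p, Finsupp.single (c p) (i p)) → σ = 1 := by
    intro σ h
    have := hsum _ _ h
    ext p
    exact congrArg Fin.val (hi.injective (congrFun this p))
  intro h0
  have hco := congrArg (coeff (∑ p, Finsupp.single (c p) (i p))) h0
  rw [Matrix.det_apply] at hco
  rw [coeff_zero] at hco
  rw [coeff_sum] at hco
  simp only [key, MvPolynomial.coeff_smul, coeff_monomial] at hco
  rw [Finset.sum_eq_single (1 : Equiv.Perm (Fin P))] at hco
  · simp at hco
  · intro σ _ hσ
    rw [if_neg (fun h => hσ (hmono σ h))]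
    simp
  · simp

/-- Proposition: existence of evaluation vectors giving the MDS property.
Let `F` be a field, `P ≤ N` positive integers, and `I = {i_1 < ⋯ < i_P}` a set of
non-negative integers.  Then there is a finite extension `K/F` and a vector `a ∈ K^N`
such that every `P × P` minor of `GV(a, I)` (obtained by an injective selection of `P`
columns) has nonzero determinant. -/
theorem stmt_1 {F : Type} [Field F] (P N : ℕ) (hP : 0 < P) (hPN : P ≤ N)
    (i : Fin P → ℕ) (hi : StrictMono i) :
    ∃ (K : Type) (_ : Field K) (_ : Algebra F K),
      FiniteDimensional F K ∧
        ∃ a : Fin N → K, ∀ c : Fin P → Fin N, Function.Injective c →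
          ((GV a i).submatrix id c).det ≠ 0 := by
  classical
  set Ω := AlgebraicClosure F with hΩ
  set q : (Fin P → Fin N) → MvPolynomial (Fin N) Ω := fun c =>
    (Matrix.of fun p n : Fin P => (MvPolynomial.X (c n) : MvPolynomial (Fin N) Ω) ^ i p).det
    with hq
  set Q : MvPolynomial (Fin N) Ω := ∏ c ∈ Finset.univ.filter Function.Injective, q c with hQdef
  have hQ : Q ≠ 0 := Finset.prod_ne_zero_iff.mpr fun c hcmem =>
    gv_poly_ne_zero i hi c (Finset.mem_filter.mp hcmem).2
  have hex : ∃ a : Fin N → Ω, MvPolynomial.eval a Q ≠ 0 := by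
    by_contra h; push_neg at h
    exact hQ (MvPolynomial.funext (fun x => by rw [h x, map_zero]))
  obtain ⟨a, ha⟩ := hex
  have hdet : ∀ c : Fin P → Fin N, Function.Injective c →
      ((GV a i).submatrix id c).det ≠ 0 := by
    intro c hc
    have h1 : MvPolynomial.eval a (q c) ≠ 0 := by
      intro h
      apply ha
      rw [hQdef, map_prod]
      exact Finset.prod_eq_zero (Finset.mem_filter.mpr ⟨Finset.mem_univ c, hc⟩) h
    have h2 : MvPolynomial.eval a (q c) = ((GV a i).submatrix id c).det := by
      show (MvPolynomial.eval a) (Matrix.det (Matrix.of fun p n : Fin P =>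
        (MvPolynomial.X (c n) : MvPolynomial (Fin N) Ω) ^ i p)) = _
      rw [RingHom.map_det]
      congr 1
      ext p n
      simp [GV, Matrix.map_apply]
    rwa [h2] at h1
  set K := IntermediateField.adjoin F (Set.range a) with hK
  have hfin : (Set.range a).Finite := Set.finite_range a
  have : Finite (Set.range a) := hfin.to_subtype
  have halg : ∀ x ∈ Set.range a, IsIntegral F x := fun x _ => Algebra.IsIntegral.isIntegral x
  have hFD : FiniteDimensional F K := IntermediateField.finiteDimensional_adjoin halg
  set a' : Fin N → K := fun n => ⟨a n, IntermediateField.subset_adjoin F _ ⟨n, rfl⟩⟩ with ha'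
  refine ⟨K, inferInstance, inferInstance, hFD, a', ?_⟩
  intro c hc h
  apply hdet c hc
  have : ((GV a i).submatrix id c) = ((GV a' i).submatrix id c).map (algebraMap K Ω) := by
    ext p n
    simp [GV, ha', Matrix.map_apply]
  rw [this, ← RingHom.mapMatrix_apply, ← RingHom.map_det, h, map_zero]
end

section
/- Let F be a field, let M be a positive integer with M ≠ 0 in F, let ζ ∈ F be a primitive M-th root of unity, and let I be a finite set of P non-negative integers each congruent to M−1 modulo M. Then there exists a finite field extension K/F and a vector a = (a_1, …, a_P) ∈ K^P with the following property: for any two polynomials h_1, h_2 ∈ K[x] such that every index i with i ≡ M−1 (mod M) at which h_1 (respectively h_2) has a nonzero coefficient lies in I, if h_1(ζ^m a_p) = h_2(ζ^m a_p) for all 0 ≤ m ≤ M−1 and 1 ≤ p ≤ P, then h_1 and h_2 have equal coefficients at every index i ∈ I. In particular, all coefficients of a polynomial at indices congruent to M−1 modulo M can be recovered from M·P evaluations. -/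
open Polynomial Finset

private lemma mod_iff_dvd {M : ℕ} (hM : 0 < M) (i : ℕ) : i % M = M - 1 ↔ M ∣ (i + 1) := by
  constructor
  · intro hi
    refine ⟨i / M + 1, ?_⟩
    have h0 := Nat.div_add_mod i M
    rw [Nat.mul_add, Nat.mul_one]
    omega
  · rintro ⟨d, hd⟩
    have hd1 : 1 ≤ d := by
      rcases Nat.eq_zero_or_pos d with h | h
      · rw [h, Nat.mul_zero] at hd; omega
      · exact h
    have e1 : M * (d - 1) + M = M * d := by
      rw [← Nat.mul_succ]; congr 1; omega
    have hi' : i = M * (d - 1) + (M - 1) := by omega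
    rw [hi', Nat.mul_add_mod, Nat.mod_eq_of_lt (by omega)]

private lemma key_sum {K : Type} [Field K] {M : ℕ} (hM : 0 < M) {ζ : K} (hζ : IsPrimitiveRoot ζ M)
    (I : Finset ℕ) (hI : ∀ i ∈ I, i % M = M - 1)
    (h : Polynomial K) (hh : ∀ i : ℕ, i % M = M - 1 → h.coeff i ≠ 0 → i ∈ I) (a : K) :
    ∑ m ∈ Finset.range M, ζ ^ m * h.eval (ζ ^ m * a)
      = (M : K) * ∑ i ∈ I, h.coeff i * a ^ i := by
  classical
  have geom : ∀ i : ℕ, ∑ m ∈ range M, (ζ ^ (i + 1)) ^ m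
      = if i % M = M - 1 then (M : K) else 0 := by
    intro i
    by_cases hi : i % M = M - 1
    · rw [if_pos hi]
      obtain ⟨d, hd⟩ := (mod_iff_dvd hM i).1 hi
      have h1 : ζ ^ (i + 1) = 1 := by rw [hd, pow_mul, hζ.pow_eq_one, one_pow]
      simp [h1]
    · rw [if_neg hi]
      have h1 : ζ ^ (i + 1) ≠ 1 := by
        intro he
        exact hi ((mod_iff_dvd hM i).2 (hζ.pow_eq_one_iff_dvd _ |>.1 he))
      have h2 : (ζ ^ (i + 1)) ^ M = 1 := by
        rw [← pow_mul, mul_comm, pow_mul, hζ.pow_eq_one, one_pow]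
      rw [geom_sum_eq h1, h2, sub_self, zero_div]
  set D := h.natDegree + 1 with hD
  set f : ℕ → K := fun i => h.coeff i * a ^ i with hf
  have main : ∑ m ∈ range M, ζ ^ m * h.eval (ζ ^ m * a)
      = ∑ i ∈ (range D).filter (fun i => i % M = M - 1), f i * (M : K) := by
    calc ∑ m ∈ range M, ζ ^ m * h.eval (ζ ^ m * a)
        = ∑ m ∈ range M, ∑ i ∈ range D, f i * (ζ ^ (i + 1)) ^ m := by
          refine sum_congr rfl fun m _ => ?_
          rw [eval_eq_sum_range, Finset.mul_sum]
          refine sum_congr rfl fun i _ => ?_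
          simp only [hf, mul_pow, ← pow_mul]
          ring
      _ = ∑ i ∈ range D, f i * ∑ m ∈ range M, (ζ ^ (i + 1)) ^ m := by
          rw [Finset.sum_comm]
          exact sum_congr rfl fun i _ => (Finset.mul_sum _ _ _).symm
      _ = ∑ i ∈ range D, if i % M = M - 1 then f i * (M : K) else 0 := by
          refine sum_congr rfl fun i _ => ?_
          rw [geom i]
          split <;> simp
      _ = ∑ i ∈ (range D).filter (fun i => i % M = M - 1), f i * (M : K) := by
          rw [Finset.sum_filter]
  have hstep : ∑ i ∈ (range D).filter (fun i => i % M = M - 1), f i = ∑ i ∈ I, f i := by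
    have eq1 : ∑ i ∈ (range D).filter (fun i => i % M = M - 1) ∩ I, f i
        = ∑ i ∈ (range D).filter (fun i => i % M = M - 1), f i := by
      refine Finset.sum_subset Finset.inter_subset_left fun x hx hnx => ?_
      have hx' := Finset.mem_filter.1 hx
      have hnI : x ∉ I := fun hxI => hnx (Finset.mem_inter.2 ⟨hx, hxI⟩)
      have : h.coeff x = 0 := by
        by_contra hc
        exact hnI (hh x hx'.2 hc)
      simp [hf, this]
    have eq2 : ∑ i ∈ (range D).filter (fun i => i % M = M - 1) ∩ I, f i
        = ∑ i ∈ I, f i := by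
      refine Finset.sum_subset Finset.inter_subset_right fun x hx hnx => ?_
      have hxf : x ∉ (range D).filter (fun i => i % M = M - 1) := fun hxf =>
        hnx (Finset.mem_inter.2 ⟨hxf, hx⟩)
      have hxm := hI x hx
      have hxD : ¬ x < D := fun hlt =>
        hxf (Finset.mem_filter.2 ⟨Finset.mem_range.2 hlt, hxm⟩)
      have : h.coeff x = 0 := coeff_eq_zero_of_natDegree_lt (by omega)
      simp [hf, this]
    rw [← eq1, eq2]
  rw [main, ← Finset.sum_mul, hstep, mul_comm]


/-- Proposition: partial polynomial interpolation.
Let `F` be a field, `M` a positive integer with `M ≠ 0` in `F`, `ζ ∈ F` a primitive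
`M`-th root of unity, and `I` a finite set of `P` non-negative integers, each congruent
to `M−1 (mod M)`.  Then there is a finite extension `K/F` and a vector
`a = (a_1, …, a_P) ∈ K^P` such that: for any two polynomials `h₁, h₂ ∈ K[x]` whose
nonzero coefficients at indices `≡ M−1 (mod M)` all lie in `I`, if
`h₁(ζ^m a_p) = h₂(ζ^m a_p)` for all `0 ≤ m ≤ M−1` and all `p`, then `h₁` and `h₂`
agree at every coefficient indexed by `I`. -/
theorem stmt_3 {F : Type} [Field F] (M : ℕ) (hM : 0 < M) (hMF : (M : F) ≠ 0)
    (ζ : F) (hζ : IsPrimitiveRoot ζ M) (P : ℕ) (I : Finset ℕ) (hcard : I.card = P)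
    (hI : ∀ i ∈ I, i % M = M - 1) :
    ∃ (K : Type) (_ : Field K) (_ : Algebra F K),
      FiniteDimensional F K ∧
        ∃ a : Fin P → K,
          ∀ h₁ h₂ : Polynomial K,
            (∀ i : ℕ, i % M = M - 1 → h₁.coeff i ≠ 0 → i ∈ I) →
            (∀ i : ℕ, i % M = M - 1 → h₂.coeff i ≠ 0 → i ∈ I) →
            (∀ m < M, ∀ p : Fin P,
              h₁.eval ((algebraMap F K ζ) ^ m * a p)
                = h₂.eval ((algebraMap F K ζ) ^ m * a p)) →
            ∀ i ∈ I, h₁.coeff i = h₂.coeff i := by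
  classical
  -- choose a prime N larger than everything in I and than the characteristic
  obtain ⟨N, hNle, hNprime⟩ := Nat.exists_infinite_primes (I.sup id + ringChar F + 1)
  have hN0 : 0 < N := hNprime.pos
  have hNF : ((N : ℕ) : F) ≠ 0 := by
    intro h0
    have hdvd : ringChar F ∣ N := (CharP.cast_eq_zero_iff F (ringChar F) N).mp h0
    rcases (Nat.Prime.eq_one_or_self_of_dvd hNprime _ hdvd) with h1 | h1
    · exact CharP.ringChar_ne_one h1
    · omega
  set n : ℕ+ := ⟨N, hN0⟩ with hn
  haveI : NeZero ((n : ℕ) : F) := ⟨hNF⟩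
  set K := CyclotomicField n F with hK
  haveI : IsCyclotomicExtension {(n : ℕ)} F K := CyclotomicField.isCyclotomicExtension (n : ℕ) F
  have hfin : FiniteDimensional F K := IsCyclotomicExtension.finiteDimensional {(n : ℕ)} F K
  obtain ⟨c, hc⟩ := IsCyclotomicExtension.exists_isPrimitiveRoot F (S := {(n : ℕ)}) K
    (Set.mem_singleton (n : ℕ)) n.ne_zero
  refine ⟨K, inferInstance, inferInstance, hfin, fun p => c ^ (p : ℕ), ?_⟩
  intro h₁ h₂ hh₁ hh₂ heval
  set ζ' : K := algebraMap F K ζ with hζ'def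
  have hζ' : IsPrimitiveRoot ζ' M := hζ.map_of_injective (algebraMap F K).injective
  have hMK : (M : K) ≠ 0 := by
    intro h0
    apply hMF
    have : algebraMap F K (M : F) = 0 := by rw [map_natCast]; exact h0
    exact (algebraMap F K).injective (by rwa [map_zero])
  -- enumeration of I
  set e := I.orderIsoOfFin hcard with he
  have hsum : ∀ p : Fin P, ∑ i ∈ I, (h₁.coeff i - h₂.coeff i) * (c ^ (p : ℕ)) ^ i = 0 := by
    intro p
    have k1 := key_sum hM hζ' I hI h₁ hh₁ (c ^ (p : ℕ))
    have k2 := key_sum hM hζ' I hI h₂ hh₂ (c ^ (p : ℕ))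
    have hse : ∑ m ∈ Finset.range M, ζ' ^ m * h₁.eval (ζ' ^ m * c ^ (p : ℕ))
        = ∑ m ∈ Finset.range M, ζ' ^ m * h₂.eval (ζ' ^ m * c ^ (p : ℕ)) := by
      refine Finset.sum_congr rfl fun m hm => ?_
      rw [heval m (Finset.mem_range.1 hm) p]
    have := k1.symm.trans (hse.trans k2)
    have hdiff : ∑ i ∈ I, (h₁.coeff i - h₂.coeff i) * (c ^ (p : ℕ)) ^ i
        = ∑ i ∈ I, h₁.coeff i * (c ^ (p : ℕ)) ^ i
          - ∑ i ∈ I, h₂.coeff i * (c ^ (p : ℕ)) ^ i := by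
      rw [← Finset.sum_sub_distrib]
      exact Finset.sum_congr rfl fun i _ => by ring
    rw [hdiff]
    have hcancel := mul_left_cancel₀ hMK this
    rw [hcancel, sub_self]
  -- rewrite the sum over I as a sum over Fin P
  have hsum' : ∀ p : Fin P,
      ∑ j : Fin P, (h₁.coeff ((e j : ℕ)) - h₂.coeff ((e j : ℕ))) * (c ^ ((e j : ℕ))) ^ (p : ℕ)
        = 0 := by
    intro p
    have := hsum p
    rw [← Finset.sum_coe_sort I (fun i => (h₁.coeff i - h₂.coeff i) * (c ^ (p : ℕ)) ^ i)] at this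
    rw [← Equiv.sum_comp e.toEquiv
      (fun x => (h₁.coeff ((x : ℕ)) - h₂.coeff ((x : ℕ))) * (c ^ (p : ℕ)) ^ ((x : ℕ)))] at this
    simpa only [← pow_mul, Nat.mul_comm, OrderIso.coe_toEquiv] using this
  have hinj : Function.Injective (fun j : Fin P => c ^ ((e j : ℕ))) := by
    intro j₁ j₂ hj
    have hb : ∀ j : Fin P, (e j : ℕ) < N := by
      intro j
      have : (e j : ℕ) ≤ I.sup id := Finset.le_sup (f := id) (e j).2
      omega
    have := hc.pow_inj (hb j₁) (hb j₂) hj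
    exact e.injective (Subtype.ext this)
  have hv := Matrix.eq_zero_of_forall_pow_sum_mul_pow_eq_zero hinj hsum'
  intro i hiI
  have : e (e.symm ⟨i, hiI⟩) = ⟨i, hiI⟩ := e.apply_symm_apply _
  have h0 := congrFun hv (e.symm ⟨i, hiI⟩)
  simp only [Pi.zero_apply] at h0
  rw [this] at h0
  exact sub_eq_zero.mp h0
end

section
/- Let M > 1 and P > 1 be integers, let K be a field, let I = {i_1 < ⋯ < i_P} be a set of P non-negative integers each congruent to M−1 modulo M, and let a = (a_1, …, a_P) ∈ K^P be such that the P×P generalized Vandermonde matrix GV(a, I) has nonzero determinant. Then a_p ≠ 0 for all p, and a_p^M ≠ a_q^M for all distinct indices p, q. -/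
/-- Proposition: necessary conditions on the evaluation vector.
Let `M > 1` and `P > 1`, let `K` be a field, let `I = {i_1 < ⋯ < i_P}` be a set of `P`
non-negative integers each congruent to `M−1 (mod M)` and let `a ∈ K^P` be such that
the `P × P` generalized Vandermonde matrix `GV(a, I)` (with `(p, q)` entry `a_q ^ i_p`)
has nonzero determinant.  Then `a_p ≠ 0` for all `p`, and `a_p ^ M ≠ a_q ^ M` for all
distinct `p, q`. -/
theorem stmt_4 {K : Type} [Field K] (M P : ℕ) (hM : 1 < M) (hP : 1 < P)
    (i : Fin P → ℕ) (hi : StrictMono i) (hIcong : ∀ p, i p % M = M - 1)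
    (a : Fin P → K)
    (hdet : (Matrix.of fun p q : Fin P => a q ^ i p).det ≠ 0) :
    (∀ p, a p ≠ 0) ∧ ∀ p q : Fin P, p ≠ q → a p ^ M ≠ a q ^ M := by
  have hipos : ∀ k, 0 < i k := by
    intro k
    rcases Nat.eq_zero_or_pos (i k) with h | h
    · have := hIcong k
      rw [h] at this
      simp at this
      omega
    · exact h
  have hne : ∀ p, a p ≠ 0 := by
    intro p hp
    apply hdet
    apply Matrix.det_eq_zero_of_column_eq_zero p
    intro k
    simp [hp, zero_pow (hipos k).ne']
  refine ⟨hne, ?_⟩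
  intro p q hpq heq
  apply hdet
  set A : Matrix (Fin P) (Fin P) K := Matrix.of fun p q : Fin P => a q ^ i p with hA
  set c : K := a p ^ (M - 1) * (a q ^ (M - 1))⁻¹ with hc
  have hcol : ∀ k, A k p = c * A k q := by
    intro k
    have hdecomp : i k = M * (i k / M) + (M - 1) := by
      have := Nat.div_add_mod (i k) M
      rw [hIcong k] at this
      omega
    have haq : (a q : K) ^ (M - 1) ≠ 0 := pow_ne_zero _ (hne q)
    have h1 : a p ^ i k = (a q ^ M) ^ (i k / M) * a p ^ (M - 1) := by
      conv_lhs => rw [hdecomp]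
      rw [pow_add, pow_mul, heq]
    have h2 : a q ^ i k = (a q ^ M) ^ (i k / M) * a q ^ (M - 1) := by
      conv_lhs => rw [hdecomp]
      rw [pow_add, pow_mul]
    show a p ^ i k = c * a q ^ i k
    rw [h1, h2, hc]
    field_simp
  have : A = Matrix.updateCol A p (fun k => c • (A k q)) := by
    ext k j
    by_cases hj : j = p
    · subst hj; rw [Matrix.updateCol_self]; simpa using hcol k
    · rw [Matrix.updateCol_ne hj]
  rw [this]
  have : (fun k => c • (A k q)) = c • (fun k => A k q) := by ext k; simp
  rw [this, Matrix.det_updateCol_smul]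
  rw [Matrix.det_updateCol_eq_zero (Ne.symm hpq), mul_zero]
end

section
/- Let F be a field, let K, M, L, a, s, b be positive integers and T ≥ 0 an integer. Let A_{k,m} ∈ F^{a×s} for 0 ≤ k ≤ K−1, 0 ≤ m ≤ M−1, let B_{m,ℓ} ∈ F^{s×b} for 0 ≤ m ≤ M−1, 0 ≤ ℓ ≤ L−1, let R_t ∈ F^{a×s} and S_t ∈ F^{s×b} for 0 ≤ t ≤ T−1, and let α_0, …, α_{T−1} and β_0, …, β_{T−1} be non-negative integers. Define the matrices of polynomials f := ∑_{k=0}^{K−1} ∑_{m=0}^{M−1} A_{k,m} x^{m+kM} + ∑_{t=0}^{T−1} R_t x^{KML+α_t} (an a×s matrix with entries in F[x]) and g := ∑_{ℓ=0}^{L−1} ∑_{m=0}^{M−1} B_{m,ℓ} x^{M−1−m+ℓKM} + ∑_{t=0}^{T−1} S_t x^{KML+β_t} (an s×b matrix with entries in F[x]), and set h := f·g (matrix product over F[x]). Then for all 0 ≤ k ≤ K−1 and 0 ≤ ℓ ≤ L−1, the entrywise coefficient of x^{M−1+kM+ℓKM} in h equals ∑_{m=0}^{M−1} A_{k,m} B_{m,ℓ},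 which is the (k,ℓ)-th block of the product AB of the block matrices A = [A_{k,m}] and B = [B_{m,ℓ}]. -/
open Polynomial

private lemma stmt7_coeff_mono_mul {F : Type} [Field F] (x y : F) (u v n : ℕ) :
    ((C x * X ^ u) * (C y * X ^ v)).coeff n = if u + v = n then x * y else 0 := by
  rw [mul_mul_mul_comm, ← C_mul, ← pow_add, coeff_C_mul, coeff_X_pow]
  simp [eq_comm, mul_ite]

private lemma stmt7_exp_eq {K M L : ℕ} (k k' : Fin K) (ℓ ℓ' : Fin L) (m' m'' : Fin M) :
    (m' : ℕ) + (k' : ℕ) * M + (M - 1 - (m'' : ℕ) + (ℓ' : ℕ) * K * M)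
      = M - 1 + (k : ℕ) * M + (ℓ : ℕ) * K * M
    ↔ ((m'' : ℕ) = (m' : ℕ) ∧ (ℓ' = ℓ ∧ k' = k)) := by
  have hM : 0 < M := m'.pos
  have hm' := m'.isLt
  have hm'' := m''.isLt
  have hbk : (k : ℕ) * M + M ≤ K * M := by
    calc (k : ℕ) * M + M = ((k : ℕ) + 1) * M := by ring
    _ ≤ K * M := Nat.mul_le_mul_right M k.isLt
  have hbk' : (k' : ℕ) * M + M ≤ K * M := by
    calc (k' : ℕ) * M + M = ((k' : ℕ) + 1) * M := by ring
    _ ≤ K * M := Nat.mul_le_mul_right M k'.isLt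
  constructor
  · intro h
    have hassoc : (ℓ' : ℕ) * K * M = (ℓ' : ℕ) * (K * M) := mul_assoc _ _ _
    have hassoc2 : (ℓ : ℕ) * K * M = (ℓ : ℕ) * (K * M) := mul_assoc _ _ _
    rw [hassoc, hassoc2] at h
    have hℓ : (ℓ' : ℕ) = (ℓ : ℕ) := by
      rcases Nat.lt_trichotomy (ℓ' : ℕ) (ℓ : ℕ) with h1 | h1 | h1
      · exfalso
        have h2 : (ℓ' : ℕ) * (K * M) + K * M ≤ (ℓ : ℕ) * (K * M) := by
          calc (ℓ' : ℕ) * (K * M) + K * M = ((ℓ' : ℕ) + 1) * (K * M) := by ring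
          _ ≤ (ℓ : ℕ) * (K * M) := Nat.mul_le_mul_right _ h1
        omega
      · exact h1
      · exfalso
        have h2 : (ℓ : ℕ) * (K * M) + K * M ≤ (ℓ' : ℕ) * (K * M) := by
          calc (ℓ : ℕ) * (K * M) + K * M = ((ℓ : ℕ) + 1) * (K * M) := by ring
          _ ≤ (ℓ' : ℕ) * (K * M) := Nat.mul_le_mul_right _ h1
        omega
    have hℓ' : ℓ' = ℓ := Fin.ext hℓ
    rw [hℓ] at h
    have hk : (k' : ℕ) = (k : ℕ) := by
      rcases Nat.lt_trichotomy (k' : ℕ) (k : ℕ) with h1 | h1 | h1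
      · exfalso
        have h2 : (k' : ℕ) * M + M ≤ (k : ℕ) * M := by
          calc (k' : ℕ) * M + M = ((k' : ℕ) + 1) * M := by ring
          _ ≤ (k : ℕ) * M := Nat.mul_le_mul_right _ h1
        omega
      · exact h1
      · exfalso
        have h2 : (k : ℕ) * M + M ≤ (k' : ℕ) * M := by
          calc (k : ℕ) * M + M = ((k : ℕ) + 1) * M := by ring
          _ ≤ (k' : ℕ) * M := Nat.mul_le_mul_right _ h1
        omega
    refine ⟨?_, hℓ', Fin.ext hk⟩
    rw [hk] at h
    omega
  · rintro ⟨h1, rfl, rfl⟩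
    omega

/-- Theorem: decodability of the polynomial code.
Let `F` be a field, `K, M, L, a, s, b` positive integers and `T ≥ 0`.  With blocks
`A k m ∈ F^{a×s}`, `B m ℓ ∈ F^{s×b}`, randomness matrices `R t ∈ F^{a×s}`,
`S t ∈ F^{s×b}`, and non-negative exponents `α, β`, define the matrix-valued polynomials
`f := ∑_{k,m} A_{k,m} x^{m+kM} + ∑_t R_t x^{KML+α_t}` and
`g := ∑_{m,ℓ} B_{m,ℓ} x^{M−1−m+ℓKM} + ∑_t S_t x^{KML+β_t}`, and `h := f·g`.
Then for all `k, ℓ`, the entrywise coefficient of `x^{M−1+kM+ℓKM}` in `h` equals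
`∑_{m} A_{k,m} B_{m,ℓ}`, the `(k, ℓ)`-th block of `AB`. -/
theorem stmt_7 {F : Type} [Field F] (K M L a s b T : ℕ)
    (hK : 0 < K) (hM : 0 < M) (hL : 0 < L) (ha : 0 < a) (hs : 0 < s) (hb : 0 < b)
    (A : Fin K → Fin M → Matrix (Fin a) (Fin s) F)
    (B : Fin M → Fin L → Matrix (Fin s) (Fin b) F)
    (R : Fin T → Matrix (Fin a) (Fin s) F)
    (S : Fin T → Matrix (Fin s) (Fin b) F)
    (α β : Fin T → ℕ) :
    let f : Matrix (Fin a) (Fin s) (Polynomial F) :=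
      (∑ k : Fin K, ∑ m : Fin M,
          (A k m).map fun z => Polynomial.C z * Polynomial.X ^ ((m : ℕ) + (k : ℕ) * M))
        + ∑ t : Fin T,
            (R t).map fun z => Polynomial.C z * Polynomial.X ^ (K * M * L + α t)
    let g : Matrix (Fin s) (Fin b) (Polynomial F) :=
      (∑ ℓ : Fin L, ∑ m : Fin M,
          (B m ℓ).map fun z =>
            Polynomial.C z * Polynomial.X ^ (M - 1 - (m : ℕ) + (ℓ : ℕ) * K * M))
        + ∑ t : Fin T,
            (S t).map fun z => Polynomial.C z * Polynomial.X ^ (K * M * L + β t)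
    ∀ (k : Fin K) (ℓ : Fin L),
      (f * g).map (fun q => q.coeff (M - 1 + (k : ℕ) * M + (ℓ : ℕ) * K * M))
        = ∑ m : Fin M, A k m * B m ℓ := by
  intro f g k ℓ
  have hassoc : (ℓ : ℕ) * K * M = (ℓ : ℕ) * (K * M) := mul_assoc _ _ _
  have hN : M - 1 + (k : ℕ) * M + (ℓ : ℕ) * K * M < K * M * L := by
    have h1 : ((k : ℕ) + 1) * M ≤ K * M := Nat.mul_le_mul_right M k.isLt
    have h2 : ((ℓ : ℕ) + 1) * (K * M) ≤ L * (K * M) := Nat.mul_le_mul_right (K * M) ℓ.isLt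
    have h3 : K * M * L = L * (K * M) := by ring
    have h4 : ((k : ℕ) + 1) * M = (k : ℕ) * M + M := by ring
    have h5 : ((ℓ : ℕ) + 1) * (K * M) = (ℓ : ℕ) * (K * M) + K * M := by ring
    omega
  have hcross1 : ∀ u v : ℕ,
      (K * M * L + u + v = M - 1 + (k : ℕ) * M + (ℓ : ℕ) * K * M) ↔ False :=
    fun u v => iff_false_intro (by omega)
  have hcross2 : ∀ u v : ℕ,
      (u + (K * M * L + v) = M - 1 + (k : ℕ) * M + (ℓ : ℕ) * K * M) ↔ False :=
    fun u v => iff_false_intro (by omega)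
  ext i j
  simp only [f, g, Matrix.map_apply, Matrix.mul_apply, Matrix.sum_apply, Matrix.add_apply,
    Polynomial.finset_sum_coeff, add_mul, mul_add, Finset.sum_mul, Finset.mul_sum,
    Polynomial.coeff_add]
  simp only [stmt7_coeff_mono_mul, hcross1, hcross2, if_false, Finset.sum_const_zero,
    add_zero, stmt7_exp_eq, Fin.val_inj, ite_and, Finset.sum_ite_irrel, Finset.sum_ite_eq,
    Finset.sum_ite_eq', Finset.mem_univ, if_true]
  rw [Finset.sum_comm]
end

section
/- Let F be a field, let M ≥ 1 be an integer, let ζ ∈ F be a primitive M-th root of unity, let T ≥ 1 and P ≥ 1 be integers with T ≤ MP, let d_0 ≥ 0 and D ≥ 1 be integers with gcd(D, M) = 1, and set α_t = d_0 + tD for 0 ≤ t ≤ T−1. Consider the T×(MP) matrix Σ over the polynomial ring F[a_1, …, a_P] whose columns are indexed by pairs (m, p) with 0 ≤ m ≤ M−1 and 1 ≤ p ≤ P, and whose entry in row t and column (m, p) is ζ^{m α_t} · a_p^{α_t}. Then for every injective selection of T columns of Σ, the determinant of the resulting T×T matrix is a nonzero element of the polynomial ring F[a_1, …, a_P]. 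-/
open MvPolynomial Matrix

lemma pow_mod_root {F : Type} [Field F] {M : ℕ} (hM : 1 ≤ M) {ζ : F}
    (hζ : IsPrimitiveRoot ζ M) (k : ℕ) : ζ ^ k = ζ ^ (k % M) := by
  conv_lhs => rw [← Nat.div_add_mod k M]
  rw [pow_add, pow_mul, hζ.pow_eq_one, one_pow, one_mul]

/-- Theorem: non-vanishing of the `T × T` minors of the security
matrix as polynomials.  Let `F` be a field, `M ≥ 1`, `ζ ∈ F` a primitive `M`-th root
of unity, `T, P ≥ 1` with `T ≤ MP`, `d₀ ≥ 0`, `D ≥ 1` with `gcd(D, M) = 1`, and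
`α_t = d₀ + tD`.  Consider the `T × (MP)` matrix `Σ` over `F[a_1, …, a_P]` whose
column indexed by `(m, p)` has entry `ζ^{m α_t} · a_p^{α_t}` in row `t`.  Then for
every injective selection of `T` columns of `Σ`, the determinant of the resulting
`T × T` matrix is nonzero in `F[a_1, …, a_P]`. -/
theorem stmt_10 {F : Type} [Field F] (M : ℕ) (hM : 1 ≤ M) (ζ : F)
    (hζ : IsPrimitiveRoot ζ M) (T P d₀ D : ℕ) (hT : 1 ≤ T) (hP : 1 ≤ P)
    (hTMP : T ≤ M * P) (hD : 1 ≤ D) (hgcd : Nat.gcd D M = 1) :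
    ∀ c : Fin T → Fin M × Fin P, Function.Injective c →
      (Matrix.of fun t t' : Fin T =>
          MvPolynomial.C (ζ ^ (((c t').1 : ℕ) * (d₀ + (t : ℕ) * D))) *
            (MvPolynomial.X (c t').2 : MvPolynomial (Fin P) F) ^ (d₀ + (t : ℕ) * D)).det
        ≠ 0 := by
  intro c hc
  have hζ0 : ζ ≠ 0 := hζ.ne_zero (by omega)
  set y : Fin T → MvPolynomial (Fin P) F :=
    fun j => C (ζ ^ ((c j).1 : ℕ)) * X (c j).2 with hy
  have hyne : ∀ j, y j ≠ 0 := fun j =>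
    mul_ne_zero (by simpa using pow_ne_zero ((c j).1 : ℕ) hζ0) (X_ne_zero _)
  have hmat : (Matrix.of fun t t' : Fin T =>
      MvPolynomial.C (ζ ^ (((c t').1 : ℕ) * (d₀ + (t : ℕ) * D))) *
        (MvPolynomial.X (c t').2 : MvPolynomial (Fin P) F) ^ (d₀ + (t : ℕ) * D))
      = (Matrix.vandermonde (fun j => y j ^ D))ᵀ * Matrix.diagonal (fun j => y j ^ d₀) := by
    ext t t'
    rw [Matrix.mul_diagonal]
    simp only [Matrix.transpose_apply, Matrix.vandermonde, Matrix.of_apply]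
    have hα : ∀ α : ℕ, C (ζ ^ (((c t').1 : ℕ) * α)) * X (c t').2 ^ α = y t' ^ α := by
      intro α
      rw [hy]
      dsimp only
      rw [mul_pow, ← map_pow, ← pow_mul]
    rw [hα, ← pow_mul, ← pow_add]
    congr 1
    ring
  rw [hmat, Matrix.det_mul, Matrix.det_transpose, Matrix.det_vandermonde,
    Matrix.det_diagonal]
  apply mul_ne_zero
  · rw [Finset.prod_ne_zero_iff]
    intro i _
    rw [Finset.prod_ne_zero_iff]
    intro j hj
    rw [Finset.mem_Ioi] at hj
    rw [sub_ne_zero]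
    have hne : c j ≠ c i := fun h => absurd (hc h) (Fin.ne_of_gt hj)
    have hz : ∀ k : Fin T, y k ^ D = C (ζ ^ (((c k).1 : ℕ) * D)) * X (c k).2 ^ D := by
      intro k
      rw [hy, mul_pow, ← map_pow, ← pow_mul]
    rw [hz, hz]
    intro heq
    by_cases hp : (c j).2 = (c i).2
    · -- same variable, so exponents of ζ must differ
      have hm : (c j).1 ≠ (c i).1 := fun h => hne (Prod.ext h hp)
      rw [hp] at heq
      have hcc : ζ ^ (((c j).1 : ℕ) * D) = ζ ^ (((c i).1 : ℕ) * D) := by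
        have h2 : (C (ζ ^ (((c j).1 : ℕ) * D)) - C (ζ ^ (((c i).1 : ℕ) * D)))
            * (X (c i).2 : MvPolynomial (Fin P) F) ^ D = 0 := by
          rw [sub_mul, heq, sub_self]
        rcases mul_eq_zero.mp h2 with h3 | h3
        · have := sub_eq_zero.mp h3
          exact C_injective _ _ this
        · exact absurd h3 (pow_ne_zero _ (X_ne_zero _))
      rw [pow_mod_root hM hζ (((c j).1 : ℕ) * D),
          pow_mod_root hM hζ (((c i).1 : ℕ) * D)] at hcc
      have := hζ.pow_inj (Nat.mod_lt _ (by omega)) (Nat.mod_lt _ (by omega)) hcc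
      have hmod : ((c j).1 : ℕ) * D ≡ ((c i).1 : ℕ) * D [MOD M] := this
      have := Nat.ModEq.cancel_right_of_coprime (by rwa [Nat.gcd_comm]) hmod
      have : ((c j).1 : ℕ) = ((c i).1 : ℕ) := by
        have h1 := this
        unfold Nat.ModEq at h1
        rwa [Nat.mod_eq_of_lt (c j).1.isLt, Nat.mod_eq_of_lt (c i).1.isLt] at h1
      exact hm (Fin.ext this)
    · -- different variables: compare coefficients
      have := congrArg (coeff (Finsupp.single (c j).2 D)) heq
      rw [coeff_C_mul, coeff_C_mul, coeff_X_pow, coeff_X_pow] at this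
      have h0 : (Finsupp.single (c i).2 D : Fin P →₀ ℕ) ≠ Finsupp.single (c j).2 D := by
        intro h
        have h2 := DFunLike.congr_fun h (c i).2
        rw [Finsupp.single_apply, Finsupp.single_apply, if_pos rfl, if_neg hp] at h2
        omega
      rw [if_pos rfl, if_neg h0, mul_one, mul_zero] at this
      exact pow_ne_zero _ hζ0 this
  · rw [Finset.prod_ne_zero_iff]
    exact fun j _ => pow_ne_zero _ (hyne j)
end

section
/- Let F be a field, let M ≥ 1 be an integer, let ζ ∈ F be a primitive M-th root of unity, let T ≥ 1 and P ≥ 1 be integers with T ≤ MP, let I be a set of P non-negative integers, let d_0, e_0 ≥ 0 and D, E ≥ 1 be integers with gcd(D, M) = gcd(E, M) = 1, and set α_t = d_0 + tD and β_t = e_0 + tE for 0 ≤ t ≤ T−1. Then there exists a finite field extension K/F and a vector a = (a_1, …, a_P) ∈ K^P such that: (i) the P×P generalized Vandermonde matrix GV(a, I) has nonzero determinant; and (ii) every T×T minor of the T×(MP) matrix Σ_A with entry (ζ^m a_p)^{α_t} in row t and column (m, p), and every T×T minor of the T×(MP) matrix Σ_B with entry (ζ^m a_p)^{β_t} in row t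 and column (m, p), is nonzero (columns indexed by pairs (m, p) with 0 ≤ m ≤ M−1, 1 ≤ p ≤ P). -/
open Polynomial in
/-- For every field `F` and `n`, there is a finite extension with at least `n` elements. -/
theorem aux_exists_big_ext (F : Type) [Field F] (n : ℕ) :
    ∃ (K : Type) (_ : Field K) (_ : Algebra F K),
      FiniteDimensional F K ∧ (n : Cardinal) ≤ Cardinal.mk K := by
  set p := ringChar F with hp
  rcases CharP.char_is_prime_or_zero F p with hprime | hzero
  · -- positive characteristic
    have hp1 : 1 < p := hprime.one_lt
    set f : F[X] := X ^ p ^ (n + 1) - X with hf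
    refine ⟨f.SplittingField, inferInstance, inferInstance, inferInstance, ?_⟩
    have hsep : f.Separable :=
      galois_poly_separable p _ (dvd_pow dvd_rfl (Nat.succ_ne_zero n))
    have hcard : Fintype.card (f.rootSet f.SplittingField) = f.natDegree :=
      card_rootSet_eq_natDegree hsep (SplittingField.splits f)
    have hdeg : f.natDegree = p ^ (n + 1) :=
      FiniteField.X_pow_card_pow_sub_X_natDegree_eq F (Nat.succ_ne_zero n) hp1
    have hn : n ≤ p ^ (n + 1) := by
      calc n ≤ 2 ^ (n + 1) := (Nat.lt_two_pow_self (n := n)).le.trans (Nat.pow_le_pow_right (by norm_num) (by omega))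
      _ ≤ p ^ (n + 1) := Nat.pow_le_pow_left hp1 _
    calc (n : Cardinal) ≤ (Fintype.card (f.rootSet f.SplittingField) : Cardinal) := by
          rw [hcard, hdeg]; exact_mod_cast hn
      _ = Cardinal.mk (f.rootSet f.SplittingField) := (Cardinal.mk_fintype _).symm
      _ ≤ Cardinal.mk f.SplittingField := Cardinal.mk_set_le _
  · -- characteristic zero
    have : CharP F 0 := by rw [← hzero]; exact ringChar.charP F
    have : CharZero F := CharP.charP_to_charZero F
    refine ⟨F, inferInstance, inferInstance, inferInstance, ?_⟩
    exact le_trans (Cardinal.nat_lt_aleph0 n).le (Cardinal.infinite_iff.mp inferInstance)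

open MvPolynomial

theorem aux_prod_X_pow (F : Type) [Field F] (P : ℕ) (e : Fin P → ℕ) :
    (∏ q : Fin P, (X q : MvPolynomial (Fin P) F) ^ e q)
      = monomial (Finsupp.equivFunOnFinite.symm e) 1 := by
  classical
  set s := Finsupp.equivFunOnFinite.symm e with hs
  have hse : ∀ q, s q = e q := fun q => by simp [hs]
  rw [monomial_eq, C_1, one_mul, Finsupp.prod,
    show (∏ q : Fin P, (X q : MvPolynomial (Fin P) F) ^ e q)
        = ∏ q : Fin P, (X q : MvPolynomial (Fin P) F) ^ s q from
      Finset.prod_congr rfl (fun q _ => by rw [hse])]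
  exact (Finset.prod_subset (Finset.subset_univ _) (fun q _ hq => by
    rw [Finsupp.notMem_support_iff.mp hq, pow_zero])).symm

theorem aux_gv_ne_zero (F : Type) [Field F] (P : ℕ) (i : Fin P → ℕ)
    (hi : Function.Injective i) :
    (Matrix.of fun p q : Fin P => (X q : MvPolynomial (Fin P) F) ^ i p).det ≠ 0 := by
  classical
  intro h
  have hc : MvPolynomial.coeff (Finsupp.equivFunOnFinite.symm i)
      ((Matrix.of fun p q : Fin P => (X q : MvPolynomial (Fin P) F) ^ i p).det) = 1 := by
    rw [Matrix.det_apply]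
    have hterm : ∀ σ : Equiv.Perm (Fin P),
        Equiv.Perm.sign σ • (∏ q, (Matrix.of fun p q : Fin P =>
            (X q : MvPolynomial (Fin P) F) ^ i p) (σ q) q)
          = C ((Equiv.Perm.sign σ : ℤ) : F) *
              monomial (Finsupp.equivFunOnFinite.symm (fun q => i (σ q))) 1 := by
      intro σ
      rw [show (∏ q, (Matrix.of fun p q : Fin P =>
            (X q : MvPolynomial (Fin P) F) ^ i p) (σ q) q)
          = ∏ q, (X q : MvPolynomial (Fin P) F) ^ (i (σ q)) from rfl,
        aux_prod_X_pow, Units.smul_def, zsmul_eq_mul]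
      norm_cast
    rw [coeff_sum]
    simp only [hterm, coeff_C_mul, coeff_monomial]
    rw [Finset.sum_eq_single (1 : Equiv.Perm (Fin P))]
    · simp
    · intro σ _ hσ
      have : ¬ (Finsupp.equivFunOnFinite.symm (fun q => i (σ q))
          = Finsupp.equivFunOnFinite.symm i) := by
        intro he
        apply hσ
        have := Finsupp.equivFunOnFinite.symm.injective he
        refine Equiv.ext fun q => ?_
        simpa using hi (congrFun this q)
      simp [this]
    · simp
  rw [h] at hc
  simp at hc

open MvPolynomial

theorem aux_gv_homog (F : Type) [Field F] (P : ℕ) (i : Fin P → ℕ) :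
    ((Matrix.of fun p q : Fin P => (X q : MvPolynomial (Fin P) F) ^ i p).det).IsHomogeneous
      (∑ q, i q) := by
  classical
  rw [Matrix.det_apply]
  refine IsHomogeneous.sum _ _ _ (fun σ _ => ?_)
  have h1 : (∏ q, (Matrix.of fun p q : Fin P =>
      (X q : MvPolynomial (Fin P) F) ^ i p) (σ q) q).IsHomogeneous (∑ q, i q) := by
    have := IsHomogeneous.prod Finset.univ
      (fun q => (X q : MvPolynomial (Fin P) F) ^ i (σ q)) (fun q => i (σ q))
      (fun q _ => by simpa using (isHomogeneous_X F q).pow (i (σ q)))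
    rwa [Equiv.sum_comp σ i] at this
  have : (Equiv.Perm.sign σ : ℤˣ) • (∏ q, (Matrix.of fun p q : Fin P =>
      (X q : MvPolynomial (Fin P) F) ^ i p) (σ q) q)
      = C ((Equiv.Perm.sign σ : ℤ) : F) * (∏ q, (Matrix.of fun p q : Fin P =>
      (X q : MvPolynomial (Fin P) F) ^ i p) (σ q) q) := by
    rw [Units.smul_def, zsmul_eq_mul]
    norm_cast
  rw [this]
  exact h1.C_mul _

/-- The difference polynomial `ζ^(m·D)·X_p^D − ζ^(m'·D)·X_{p'}^D` is nonzero. -/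
theorem aux_diff_ne_zero (F : Type) [Field F] (M P : ℕ) (hM : 1 ≤ M) (ζ : F)
    (hζ : IsPrimitiveRoot ζ M) (D : ℕ) (hD : 1 ≤ D) (hgcdD : Nat.gcd D M = 1)
    (u v : Fin M × Fin P) (huv : u ≠ v) :
    (C (ζ ^ ((u.1 : ℕ) * D)) * X u.2 ^ D - C (ζ ^ ((v.1 : ℕ) * D)) * X v.2 ^ D
      : MvPolynomial (Fin P) F) ≠ 0 := by
  classical
  have hζ0 : ζ ≠ 0 := hζ.ne_zero (by omega)
  intro h
  have hc := congrArg (MvPolynomial.coeff (Finsupp.single u.2 D)) h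
  rw [coeff_sub, coeff_zero] at hc
  have hXD : ∀ j : Fin P, ((X j : MvPolynomial (Fin P) F) ^ D)
      = monomial (Finsupp.single j D) 1 := by
    intro j; rw [X_pow_eq_monomial]
  rw [hXD, hXD, coeff_C_mul, coeff_C_mul, coeff_monomial, coeff_monomial] at hc
  have hsingle : ∀ j : Fin P, (Finsupp.single j D = Finsupp.single u.2 D) ↔ j = u.2 :=
    fun j => Finsupp.single_left_inj (by omega)
  by_cases hv : v.2 = u.2
  · -- same p-index, different roots of unity power
    have hm : u.1 ≠ v.1 := by
      intro h1; exact huv (Prod.ext h1 (hv.symm))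
    rw [if_pos ((hsingle u.2).mpr rfl), if_pos ((hsingle v.2).mpr hv)] at hc
    have heq : ζ ^ ((u.1 : ℕ) * D) = ζ ^ ((v.1 : ℕ) * D) := by
      have := sub_eq_zero.mp hc; simpa using this
    -- reduce exponents mod M
    have horder : M = orderOf ζ := hζ.eq_orderOf
    have hpowmod : ∀ z : ℕ, ζ ^ (z % M) = ζ ^ z := by
      intro z
      conv_rhs => rw [← pow_mod_orderOf]
      rw [← horder]
    have hmod : ((u.1 : ℕ) * D) % M = ((v.1 : ℕ) * D) % M := by
      refine hζ.pow_inj (Nat.mod_lt _ (by omega)) (Nat.mod_lt _ (by omega)) ?_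
      rw [hpowmod, hpowmod]; exact heq
    have hcan : ((u.1 : ℕ)) ≡ ((v.1 : ℕ)) [MOD M] :=
      Nat.ModEq.cancel_right_of_coprime (by rw [Nat.gcd_comm]; exact hgcdD) hmod
    have : ((u.1 : ℕ)) = ((v.1 : ℕ)) := by
      have h1 : (u.1 : ℕ) % M = (v.1 : ℕ) % M := hcan
      rwa [Nat.mod_eq_of_lt u.1.isLt, Nat.mod_eq_of_lt v.1.isLt] at h1
    exact hm (Fin.ext this)
  · rw [if_pos ((hsingle u.2).mpr rfl), if_neg (by simp [hsingle, hv])] at hc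
    simp only [mul_one, mul_zero, sub_zero] at hc
    exact pow_ne_zero _ hζ0 hc
open Matrix in

/-- Generalized Vandermonde determinant with arithmetic-progression exponents. -/
theorem aux_vand_ne_zero (K : Type) [Field K] (T d₀ D : ℕ) (y : Fin T → K)
    (h0 : ∀ t, y t ≠ 0) (hinj : Function.Injective fun t => y t ^ D) :
    (Matrix.of fun t t' : Fin T => y t' ^ (d₀ + (t : ℕ) * D)).det ≠ 0 := by
  have hmat : (Matrix.of fun t t' : Fin T => y t' ^ (d₀ + (t : ℕ) * D))
      = Matrix.of fun t t' : Fin T =>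
          (y t' ^ d₀) * ((Matrix.vandermonde fun s => y s ^ D)ᵀ t t') := by
    ext t t'
    simp only [Matrix.of_apply, Matrix.transpose_apply, Matrix.vandermonde_apply]
    rw [pow_add, mul_comm (t : ℕ) D, pow_mul]
  rw [hmat, Matrix.det_mul_row, Matrix.det_transpose]
  exact mul_ne_zero (Finset.prod_ne_zero_iff.mpr fun t _ => pow_ne_zero _ (h0 t))
    (Matrix.det_vandermonde_ne_zero_iff.mpr hinj)

open MvPolynomial in
theorem aux_eval_ne_zero (K : Type) [Field K] {σ : Type} {Q : MvPolynomial σ K} {n : ℕ}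
    (hQ : Q.IsHomogeneous n) (hQ0 : Q ≠ 0) (hn : (n : Cardinal) ≤ Cardinal.mk K) :
    ∃ r : σ → K, eval r Q ≠ 0 := by
  by_contra h
  push_neg at h
  exact hQ0 (hQ.eq_zero_of_forall_eval_eq_zero_of_le_card h hn)

open MvPolynomial

/-- Corollary: existence of evaluation vectors giving decodability and
`T`-security.  Let `F` be a field, `M ≥ 1`, `ζ ∈ F` a primitive `M`-th root of unity,
`T, P ≥ 1` with `T ≤ MP`, `I = {i_1 < ⋯ < i_P}` a set of `P` non-negative integers,
`d₀, e₀ ≥ 0`, `D, E ≥ 1` with `gcd(D, M) = gcd(E, M) = 1`, and `α_t = d₀ + tD`,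
`β_t = e₀ + tE`.  Then there exist a finite extension `K/F` and `a ∈ K^P` such that
(i) the `P × P` generalized Vandermonde matrix `GV(a, I)` has nonzero determinant, and
(ii) every `T × T` minor of the `T × (MP)` matrices `Σ_A` (entry `(ζ^m a_p)^{α_t}`)
and `Σ_B` (entry `(ζ^m a_p)^{β_t}`) is nonzero. -/
theorem stmt_11 {F : Type} [Field F] (M : ℕ) (hM : 1 ≤ M) (ζ : F)
    (hζ : IsPrimitiveRoot ζ M) (T P : ℕ) (hT : 1 ≤ T) (hP : 1 ≤ P) (hTMP : T ≤ M * P)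
    (i : Fin P → ℕ) (hi : StrictMono i) (d₀ e₀ D E : ℕ) (hD : 1 ≤ D) (hE : 1 ≤ E)
    (hgcdD : Nat.gcd D M = 1) (hgcdE : Nat.gcd E M = 1) :
    ∃ (K : Type) (_ : Field K) (_ : Algebra F K),
      FiniteDimensional F K ∧
        ∃ a : Fin P → K,
          (Matrix.of fun p q : Fin P => a q ^ i p).det ≠ 0 ∧
          (∀ c : Fin T → Fin M × Fin P, Function.Injective c →
            (Matrix.of fun t t' : Fin T =>
                ((algebraMap F K ζ) ^ (((c t').1 : ℕ)) * a (c t').2)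
                  ^ (d₀ + (t : ℕ) * D)).det ≠ 0) ∧
          (∀ c : Fin T → Fin M × Fin P, Function.Injective c →
            (Matrix.of fun t t' : Fin T =>
                ((algebraMap F K ζ) ^ (((c t').1 : ℕ)) * a (c t').2)
                  ^ (e₀ + (t : ℕ) * E)).det ≠ 0) := by
  classical
  -- the master polynomial over F
  set q1 : MvPolynomial (Fin P) F :=
    (Matrix.of fun p q : Fin P => (X q : MvPolynomial (Fin P) F) ^ i p).det with hq1
  set q2 : MvPolynomial (Fin P) F := ∏ p, X p with hq2
  set fd : ℕ → (Fin M × Fin P) × (Fin M × Fin P) → MvPolynomial (Fin P) F :=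
    fun D' uv => C (ζ ^ ((uv.1.1 : ℕ) * D')) * X uv.1.2 ^ D'
      - C (ζ ^ ((uv.2.1 : ℕ) * D')) * X uv.2.2 ^ D' with hfd
  set q3 : MvPolynomial (Fin P) F := ∏ uv ∈ Finset.univ.offDiag, fd D uv with hq3
  set q4 : MvPolynomial (Fin P) F := ∏ uv ∈ Finset.univ.offDiag, fd E uv with hq4
  set Q : MvPolynomial (Fin P) F := q1 * (q2 * (q3 * q4)) with hQdef
  set cMP : ℕ := (Finset.univ.offDiag : Finset ((Fin M × Fin P) × (Fin M × Fin P))).card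
    with hcMP
  -- homogeneity
  have hfdhom : ∀ (D' : ℕ) (uv : (Fin M × Fin P) × (Fin M × Fin P)),
      (fd D' uv).IsHomogeneous D' := fun D' uv =>
    (isHomogeneous_C_mul_X_pow _ _ _).sub (isHomogeneous_C_mul_X_pow _ _ _)
  have hq2hom : q2.IsHomogeneous P := by
    have := IsHomogeneous.prod Finset.univ (fun p : Fin P => (X p : MvPolynomial (Fin P) F))
      (fun _ => 1) (fun p _ => isHomogeneous_X F p)
    simpa using this
  have hq3hom : q3.IsHomogeneous (cMP * D) := by
    have := IsHomogeneous.prod Finset.univ.offDiag (fun uv => fd D uv)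
      (fun _ => D) (fun uv _ => hfdhom D uv)
    rwa [Finset.sum_const, smul_eq_mul] at this
  have hq4hom : q4.IsHomogeneous (cMP * E) := by
    have := IsHomogeneous.prod Finset.univ.offDiag (fun uv => fd E uv)
      (fun _ => E) (fun uv _ => hfdhom E uv)
    rwa [Finset.sum_const, smul_eq_mul] at this
  have hQhom : Q.IsHomogeneous ((∑ q, i q) + (P + (cMP * D + cMP * E))) :=
    (aux_gv_homog F P i).mul (hq2hom.mul (hq3hom.mul hq4hom))
  -- nonvanishing
  have hq10 : q1 ≠ 0 := aux_gv_ne_zero F P i hi.injective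
  have hq20 : q2 ≠ 0 :=
    Finset.prod_ne_zero_iff.mpr fun p _ => MvPolynomial.X_ne_zero p
  have hfd0 : ∀ (D' : ℕ), 1 ≤ D' → Nat.gcd D' M = 1 →
      ∀ uv ∈ (Finset.univ.offDiag :
        Finset ((Fin M × Fin P) × (Fin M × Fin P))), fd D' uv ≠ 0 := by
    intro D' hD' hg uv huv
    obtain ⟨-, -, hne⟩ := Finset.mem_offDiag.mp huv
    exact aux_diff_ne_zero F M P hM ζ hζ D' hD' hg uv.1 uv.2 hne
  have hq30 : q3 ≠ 0 := Finset.prod_ne_zero_iff.mpr (hfd0 D hD hgcdD)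
  have hq40 : q4 ≠ 0 := Finset.prod_ne_zero_iff.mpr (hfd0 E hE hgcdE)
  have hQ0 : Q ≠ 0 := mul_ne_zero hq10 (mul_ne_zero hq20 (mul_ne_zero hq30 hq40))
  -- pass to a large finite extension
  obtain ⟨K, hKfield, hKalg, hKfd, hKcard⟩ :=
    aux_exists_big_ext F ((∑ q, i q) + (P + (cMP * D + cMP * E)))
  refine ⟨K, hKfield, hKalg, hKfd, ?_⟩
  have halginj : Function.Injective (algebraMap F K) := (algebraMap F K).injective
  have hQ'0 : MvPolynomial.map (algebraMap F K) Q ≠ 0 := by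
    intro h
    exact hQ0 (MvPolynomial.map_injective _ halginj (by rw [h, map_zero]))
  obtain ⟨a, ha⟩ := aux_eval_ne_zero K (hQhom.map (algebraMap F K)) hQ'0 hKcard
  rw [eval_map, ← aeval_def] at ha
  refine ⟨a, ?_⟩
  rw [hQdef, map_mul, map_mul, map_mul] at ha
  obtain ⟨h1, h2, h3, h4⟩ : aeval a q1 ≠ 0 ∧ aeval a q2 ≠ 0 ∧ aeval a q3 ≠ 0
      ∧ aeval a q4 ≠ 0 := by
    have := mul_ne_zero_iff.mp ha
    have h2' := mul_ne_zero_iff.mp this.2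
    have h3' := mul_ne_zero_iff.mp h2'.2
    exact ⟨this.1, h2'.1, h3'.1, h3'.2⟩
  -- basic quantities
  have hζ0 : ζ ≠ 0 := hζ.ne_zero (by omega)
  have hζK0 : algebraMap F K ζ ≠ 0 := fun h => hζ0 (halginj (by rw [h, map_zero]))
  have ha0 : ∀ p, a p ≠ 0 := by
    intro p
    have h2' : aeval a q2 = ∏ p, a p := by
      rw [hq2, map_prod]
      simp [aeval_X]
    rw [h2'] at h2
    exact Finset.prod_ne_zero_iff.mp h2 p (Finset.mem_univ p)
  -- the evaluation points of the secure matrices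
  have hxpow : ∀ (D' : ℕ) (u : Fin M × Fin P),
      ((algebraMap F K ζ) ^ ((u.1 : ℕ)) * a u.2) ^ D'
        = algebraMap F K (ζ ^ ((u.1 : ℕ) * D')) * a u.2 ^ D' := by
    intro D' u
    rw [mul_pow, ← pow_mul, map_pow]
  have hfdval : ∀ (D' : ℕ) (uv : (Fin M × Fin P) × (Fin M × Fin P)),
      aeval a (fd D' uv)
        = ((algebraMap F K ζ) ^ ((uv.1.1 : ℕ)) * a uv.1.2) ^ D'
          - ((algebraMap F K ζ) ^ ((uv.2.1 : ℕ)) * a uv.2.2) ^ D' := by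
    intro D' uv
    rw [hfd, hxpow, hxpow]
    simp [map_sub, map_mul, map_pow, aeval_C, aeval_X]
  have hxD : ∀ (D' : ℕ), (∏ uv ∈ (Finset.univ.offDiag :
        Finset ((Fin M × Fin P) × (Fin M × Fin P))), fd D' uv) ∈ ({q3, q4} : Set _) →
      aeval a (∏ uv ∈ Finset.univ.offDiag, fd D' uv) ≠ 0 →
      ∀ u v : Fin M × Fin P, u ≠ v →
        ((algebraMap F K ζ) ^ ((u.1 : ℕ)) * a u.2) ^ D'
          ≠ ((algebraMap F K ζ) ^ ((v.1 : ℕ)) * a v.2) ^ D' := by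
    intro D' _ hne u v huv
    rw [map_prod] at hne
    have := Finset.prod_ne_zero_iff.mp hne (u, v)
      (Finset.mem_offDiag.mpr ⟨Finset.mem_univ _, Finset.mem_univ _, huv⟩)
    rw [hfdval] at this
    exact sub_ne_zero.mp this
  -- security determinant argument
  have hsec : ∀ (D' d' : ℕ),
      (∀ u v : Fin M × Fin P, u ≠ v →
        ((algebraMap F K ζ) ^ ((u.1 : ℕ)) * a u.2) ^ D'
          ≠ ((algebraMap F K ζ) ^ ((v.1 : ℕ)) * a v.2) ^ D') →
      ∀ c : Fin T → Fin M × Fin P, Function.Injective c →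
        (Matrix.of fun t t' : Fin T =>
          ((algebraMap F K ζ) ^ (((c t').1 : ℕ)) * a (c t').2)
            ^ (d' + (t : ℕ) * D')).det ≠ 0 := by
    intro D' d' hdist c hc
    refine aux_vand_ne_zero K T d' D'
      (fun t' => (algebraMap F K ζ) ^ (((c t').1 : ℕ)) * a (c t').2)
      (fun t' => mul_ne_zero (pow_ne_zero _ hζK0) (ha0 _)) ?_
    intro s t hst
    have hcc : c s = c t := by
      by_contra h'
      exact hdist (c s) (c t) h' hst
    exact hc hcc
  refine ⟨?_, ?_, ?_⟩
  · -- (i) decodability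
    have : aeval a q1 = (Matrix.of fun p q : Fin P => a q ^ i p).det := by
      rw [hq1, AlgHom.map_det]
      congr 1
      ext p q
      simp [Matrix.map_apply, map_pow, aeval_X]
    rwa [this] at h1
  · exact hsec D d₀ (hxD D (by rw [← hq3]; left; rfl) (by rwa [← hq3]))
  · exact hsec E e₀ (hxD E (by rw [← hq4]; right; rfl) (by rwa [← hq4]))
end

section
/- Let F be a field, let K, L, M, P ≥ 1 be integers with P ≥ KL + 1, let ζ ∈ F be a primitive M-th root of unity, and let a_1, …, a_P ∈ F satisfy a_p ≠ 0 for all p and a_p^M ≠ a_q^M for all distinct p, q. Then: (1) the MP elements ζ^m a_p for 0 ≤ m ≤ M−1 and 1 ≤ p ≤ P are pairwise distinct; and (2) for any subset T of the index set {(m, p) : 0 ≤ m ≤ M−1, 1 ≤ p ≤ P} with |T| = KML + M − 1, any two polynomials h_1, h_2 ∈ F[x] of degree at most KML + M − 2 satisfying h_1(ζ^m a_p) = h_2(ζ^m a_p) for all (m, p) ∈ T are equal. -/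
/-- Theorem: recovery threshold `KML + M − 1` of MP codes without
security.  Let `F` be a field, `K, L, M, P ≥ 1` with `P ≥ KL + 1`, `ζ ∈ F` a primitive
`M`-th root of unity, and `a_1, …, a_P ∈ F` with `a_p ≠ 0` and `a_p^M ≠ a_q^M` for
distinct `p, q`.  Then (1) the `MP` points `ζ^m a_p` are pairwise distinct; and (2) for
any subset `T` of `{(m, p)}` of size `KML + M − 1`, any two polynomials of degree at
most `KML + M − 2` agreeing at the points `ζ^m a_p` for `(m, p) ∈ T` are equal. -/
theorem stmt_19 {F : Type} [Field F] (K L M P : ℕ) (hK : 1 ≤ K) (hL : 1 ≤ L)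
    (hM : 1 ≤ M) (hP : K * L + 1 ≤ P) (ζ : F) (hζ : IsPrimitiveRoot ζ M)
    (a : Fin P → F) (ha0 : ∀ p, a p ≠ 0)
    (haM : ∀ p q : Fin P, p ≠ q → a p ^ M ≠ a q ^ M) :
    Function.Injective (fun mp : Fin M × Fin P => ζ ^ (mp.1 : ℕ) * a mp.2) ∧
      ∀ T : Finset (Fin M × Fin P), T.card = K * M * L + M - 1 →
        ∀ h₁ h₂ : Polynomial F,
          h₁.degree ≤ (K * M * L + M - 2 : ℕ) → h₂.degree ≤ (K * M * L + M - 2 : ℕ) →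
          (∀ mp ∈ T, h₁.eval (ζ ^ (mp.1 : ℕ) * a mp.2)
              = h₂.eval (ζ ^ (mp.1 : ℕ) * a mp.2)) →
          h₁ = h₂ := by
  have hinj : Function.Injective (fun mp : Fin M × Fin P => ζ ^ (mp.1 : ℕ) * a mp.2) := by
    rintro ⟨m, p⟩ ⟨m', p'⟩ h
    simp only at h
    have hpM : (ζ ^ (m : ℕ) * a p) ^ M = (ζ ^ (m' : ℕ) * a p') ^ M := by rw [h]
    rw [mul_pow, mul_pow, ← pow_mul, ← pow_mul, mul_comm (m : ℕ) M, mul_comm (m' : ℕ) M,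
      pow_mul, pow_mul, hζ.pow_eq_one, one_pow, one_pow, one_mul, one_mul] at hpM
    have hpp : p = p' := by
      by_contra hne
      exact haM p p' hne hpM
    subst hpp
    have hz : ζ ^ (m : ℕ) = ζ ^ (m' : ℕ) := mul_right_cancel₀ (ha0 p) h
    have := hζ.pow_inj m.isLt m'.isLt hz
    exact Prod.ext (Fin.ext this) rfl
  refine ⟨hinj, ?_⟩
  intro T hT h₁ h₂ hd₁ hd₂ heq
  classical
  have h1 : 1 ≤ K * M * L := le_trans (by norm_num) (Nat.mul_le_mul (Nat.mul_le_mul hK hM) hL)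
  have h2 : 2 ≤ K * M * L + M := by omega
  have key : h₁ - h₂ = 0 := by
    rcases eq_or_ne (h₁ - h₂) 0 with h | hne
    · exact h
    apply Polynomial.eq_zero_of_natDegree_lt_card_of_eval_eq_zero' (h₁ - h₂)
      (T.image (fun mp : Fin M × Fin P => ζ ^ (mp.1 : ℕ) * a mp.2))
    · intro i hi
      simp only [Finset.mem_image] at hi
      obtain ⟨mp, hmp, rfl⟩ := hi
      simp [heq mp hmp]
    · have hcard : (T.image (fun mp : Fin M × Fin P => ζ ^ (mp.1 : ℕ) * a mp.2)).card
          = K * M * L + M - 1 := by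
        rw [Finset.card_image_of_injective _ hinj, hT]
      rw [hcard]
      have hdeg : (h₁ - h₂).degree ≤ (K * M * L + M - 2 : ℕ) :=
        le_trans (Polynomial.degree_sub_le _ _) (max_le hd₁ hd₂)
      have := Polynomial.natDegree_le_iff_degree_le.mpr hdeg
      omega
  linear_combination key
end
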